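/- Let f ∈ ℂ[[t²,t³]] be a power series whose constant term is zero and whose coefficient of t² is nonzero (so f = t²·(a + b₁t + b₂t² + ⋯) with a ≠ 0). Then the quotient ℂ[[t²,t³]]/(f) of ℂ[[t²,t³]] by the ideal generated by f is spanned as a ℂ-vector space by the residue classes of 1, t² and t³; in particular dim_ℂ ℂ[[t²,t³]]/(f) ≤ 3. -/

import Mathlib

/-! Write `f = t² u` with `u` a unit of `ℂ[[t]]`. For any `s ∈ ℂ[[t]]`, `t⁴ s = f · (t² u⁻¹ s)` and
`t² u⁻¹ s` has no `t`-term, so the ideal `(f)` of `ℂ[[t²,t³]]` contains `t⁴ ℂ[[t]]`. Modulo that,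
every element of `ℂ[[t²,t³]]` agrees with `a + b t² + c t³`. -/

set_option synthInstance.maxHeartbeats 1000000
set_option maxHeartbeats 1000000

/-- The subalgebra `ℂ[[t²,t³]]` of `ℂ[[t]]`: power series whose coefficient of `t` vanishes. -/
noncomputable def cuspAlgebra : Subalgebra ℂ (PowerSeries ℂ) where
  carrier := {f | PowerSeries.coeff (R := ℂ) 1 f = 0}
  add_mem' := by
    intro a b ha hb
    simp only [Set.mem_setOf_eq, map_add] at *
    rw [ha, hb, add_zero]
  mul_mem' := by
    intro a b ha hb
    simp only [Set.mem_setOf_eq] at *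
    rw [PowerSeries.coeff_mul, Finset.Nat.sum_antidiagonal_eq_sum_range_succ_mk]
    simp [Finset.sum_range_succ, ha, hb]
  one_mem' := by simp [Set.mem_setOf_eq, PowerSeries.coeff_one]
  algebraMap_mem' := by
    intro c
    simp [Set.mem_setOf_eq, PowerSeries.algebraMap_apply, PowerSeries.coeff_C]

/-- `t² ∈ ℂ[[t²,t³]]`. -/
noncomputable def tSq : cuspAlgebra :=
  ⟨PowerSeries.X ^ 2, show PowerSeries.coeff (R := ℂ) 1 (PowerSeries.X ^ 2) = 0 by
    simp [PowerSeries.coeff_X_pow]⟩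

/-- `t³ ∈ ℂ[[t²,t³]]`. -/
noncomputable def tCube : cuspAlgebra :=
  ⟨PowerSeries.X ^ 3, show PowerSeries.coeff (R := ℂ) 1 (PowerSeries.X ^ 3) = 0 by
    simp [PowerSeries.coeff_X_pow]⟩

open PowerSeries

theorem PowerSeries.exists_eq_X_pow_mul_unit {R : Type*} [CommRing R] {f : R⟦X⟧} {n : ℕ}
    (hlow : ∀ i < n, coeff i f = 0) (hn : IsUnit (coeff n f)) :
    ∃ u : R⟦X⟧ˣ, f = X ^ n * (u : R⟦X⟧) := by
  obtain ⟨u, rfl⟩ := X_pow_dvd_iff.2 hlow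
  have hu : IsUnit (constantCoeff u) := by simpa [coeff_X_pow_mul'] using hn
  obtain ⟨U, rfl⟩ := isUnit_iff_constantCoeff.2 hu
  exact ⟨U, rfl⟩

theorem mem_span_singleton_of_X_pow_four_dvd {f : cuspAlgebra} {u : ℂ⟦X⟧ˣ}
    (hf : (f : ℂ⟦X⟧) = X ^ 2 * (u : ℂ⟦X⟧)) {g : cuspAlgebra}
    (hg : (X : ℂ⟦X⟧) ^ 4 ∣ g) :
    g ∈ Ideal.span {f} := by
  obtain ⟨s, hs⟩ := hg
  have hq : coeff 1 (X ^ 2 * ((↑u⁻¹ : ℂ⟦X⟧) * s) : ℂ⟦X⟧) = 0 := by simp [coeff_X_pow_mul']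
  refine Ideal.mem_span_singleton'.2 ⟨⟨X ^ 2 * ((↑u⁻¹ : ℂ⟦X⟧) * s), hq⟩, Subtype.ext ?_⟩
  change X ^ 2 * ((↑u⁻¹ : ℂ⟦X⟧) * s) * (f : ℂ⟦X⟧) = (g : ℂ⟦X⟧)
  rw [hs, hf]
  calc _ = X ^ 4 * s * ((↑u⁻¹ : ℂ⟦X⟧) * (u : ℂ⟦X⟧)) := by ring
    _ = X ^ 4 * s := by rw [Units.inv_mul, mul_one]

theorem X_pow_four_dvd_sub_lowDegreePart (g : cuspAlgebra) :
    (X : ℂ⟦X⟧) ^ 4 ∣ ((g - (coeff 0 (g : ℂ⟦X⟧) • 1 + coeff 2 (g : ℂ⟦X⟧) • tSq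
      + coeff 3 (g : ℂ⟦X⟧) • tCube) : cuspAlgebra) : ℂ⟦X⟧) := by
  have hg1 : coeff 1 (g : ℂ⟦X⟧) = 0 := g.2
  refine X_pow_dvd_iff.2 fun m hm ↦ ?_
  interval_cases m <;> simp [tSq, tCube, coeff_X_pow, coeff_one, hg1]

theorem span_one_tSq_tCube_eq_top {I : Ideal cuspAlgebra}
    (hI : ∀ g : cuspAlgebra, (X : ℂ⟦X⟧) ^ 4 ∣ g → g ∈ I) :
    Submodule.span ℂ
      ({1, Ideal.Quotient.mk I tSq, Ideal.Quotient.mk I tCube} : Set (cuspAlgebra ⧸ I)) = ⊤ := by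
  refine eq_top_iff.2 fun x _ ↦ ?_
  obtain ⟨g, rfl⟩ := Ideal.Quotient.mk_surjective x
  have hg := Ideal.Quotient.eq.2 (hI _ (X_pow_four_dvd_sub_lowDegreePart g))
  rw [hg, ← Ideal.Quotient.mkₐ_eq_mk ℂ]
  simp only [map_add, map_smul, map_one]
  refine add_mem (add_mem ?_ ?_) ?_ <;>
    exact Submodule.smul_mem _ _ (Submodule.subset_span (by simp))

theorem rank_le_three_of_span_eq_top {R M : Type*} [Ring R] [StrongRankCondition R]
    [AddCommGroup M] [Module R M]
    {x y z : M} (h : Submodule.span R ({x, y, z} : Set M) = ⊤) : Module.rank R M ≤ 3 := by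
  classical
  have := rank_span_finset_le (R := R) ({x, y, z} : Finset M)
  rw [Finset.coe_insert, Finset.coe_insert, Finset.coe_singleton, h, rank_top] at this
  exact this.trans (by exact_mod_cast Finset.card_le_three)

/-- Let `f ∈ ℂ[[t²,t³]]` have zero constant term and nonzero
coefficient of `t²`.  Then `ℂ[[t²,t³]]/(f)` is spanned as a `ℂ`-vector space by the
residue classes of `1`, `t²` and `t³`; in particular its `ℂ`-dimension is at most
`3`. -/
theorem quotient_spanned_by_one_tSq_tCube
    (f : cuspAlgebra)
    (h0 : PowerSeries.coeff (R := ℂ) 0 (f : PowerSeries ℂ) = 0)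
    (h2 : PowerSeries.coeff (R := ℂ) 2 (f : PowerSeries ℂ) ≠ 0) :
    Submodule.span ℂ
        ({1, Ideal.Quotient.mk (Ideal.span {f}) tSq,
          Ideal.Quotient.mk (Ideal.span {f}) tCube} :
          Set (cuspAlgebra ⧸ Ideal.span {f})) = ⊤ ∧
      Module.rank ℂ (cuspAlgebra ⧸ Ideal.span {f}) ≤ 3 := by
  have hlow : ∀ i < 2, coeff i (f : ℂ⟦X⟧) = 0 := fun i hi ↦ by
    interval_cases i
    exacts [h0, f.2]
  obtain ⟨u, hf⟩ := exists_eq_X_pow_mul_unit hlow h2.isUnit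
  have hspan := span_one_tSq_tCube_eq_top fun g hg ↦ mem_span_singleton_of_X_pow_four_dvd hf hg
  exact ⟨hspan, rank_le_three_of_span_eq_top hspan⟩
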